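/- arXiv:1911.13297 — 4 statements merged into one kernel-verified Lean document; each statement's English description precedes it below -/
import Mathlib

section
/- If S, T, U are numberings of shape λ ⊢ n and U is obtained from T by swapping two entire rows of equal length ℓ, then v_U^S = (−1)^ℓ · v_T^S. -/
open Equiv MonoidAlgebra
open scoped Classical

/-- A *numbering* of shape `μ ⊢ n`: a bijective filling of the cells of the Young diagram `μ`
with the entries `Fin n` (representing `1, …, n`). -/
abbrev YNumbering (μ : YoungDiagram) (n : ℕ) := ↥μ.cells ≃ Fin n

namespace YNumbering

variable {μ : YoungDiagram} {n : ℕ}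

/-- The action of `π ∈ S_n` on numberings: `(π • T) c = π (T c)`. -/
def perm (π : Equiv.Perm (Fin n)) (T : YNumbering μ n) : YNumbering μ n := T.trans π

/-- The row index of the cell of `T` containing the entry `i`. -/
def rowFn (T : YNumbering μ n) (i : Fin n) : ℕ := ((T.symm i : ℕ × ℕ)).1

/-- The column index of the cell of `T` containing the entry `i`. -/
def colFn (T : YNumbering μ n) (i : Fin n) : ℕ := ((T.symm i : ℕ × ℕ)).2

/-- The row group `R(T)`: permutations permuting the entries within each row of `T`. -/
def rowGroup (T : YNumbering μ n) : Subgroup (Equiv.Perm (Fin n)) where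
  carrier := {π | ∀ i, T.rowFn (π i) = T.rowFn i}
  one_mem' := fun _ => rfl
  mul_mem' := by
    intro a b ha hb i
    rw [Equiv.Perm.mul_apply, ha, hb]
  inv_mem' := by
    intro a ha i
    have h := ha (a⁻¹ i)
    rw [Equiv.Perm.coe_inv, Equiv.apply_symm_apply] at h
    exact h.symm

/-- The column group `C(T)`: permutations permuting the entries within each column of `T`. -/
def colGroup (T : YNumbering μ n) : Subgroup (Equiv.Perm (Fin n)) where
  carrier := {π | ∀ i, T.colFn (π i) = T.colFn i}
  one_mem' := fun _ => rfl
  mul_mem' := by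
    intro a b ha hb i
    rw [Equiv.Perm.mul_apply, ha, hb]
  inv_mem' := by
    intro a ha i
    have h := ha (a⁻¹ i)
    rw [Equiv.Perm.coe_inv, Equiv.apply_symm_apply] at h
    exact h.symm

/-- The Young symmetrizer `a_T = Σ_{ρ ∈ R(T)} ρ` in the group algebra `R[S_n]`. -/
noncomputable def aElt (R : Type*) [CommRing R] (T : YNumbering μ n) :
    MonoidAlgebra R (Equiv.Perm (Fin n)) :=
  ∑ ρ : T.rowGroup, MonoidAlgebra.single (ρ : Equiv.Perm (Fin n)) (1 : R)

/-- The Young symmetrizer `b_T = Σ_{ζ ∈ C(T)} sgn(ζ)·ζ` in the group algebra `R[S_n]`. -/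
noncomputable def bElt (R : Type*) [CommRing R] (T : YNumbering μ n) :
    MonoidAlgebra R (Equiv.Perm (Fin n)) :=
  ∑ ζ : T.colGroup, MonoidAlgebra.single (ζ : Equiv.Perm (Fin n))
    (((Equiv.Perm.sign (ζ : Equiv.Perm (Fin n)) : ℤ) : R))

/-- The Young symmetrizer `c_T = b_T · a_T`. -/
noncomputable def cElt (R : Type*) [CommRing R] (T : YNumbering μ n) :
    MonoidAlgebra R (Equiv.Perm (Fin n)) :=
  bElt R T * aElt R T

/-- `σ_{T,S}` : the unique permutation with `σ_{T,S} · T = S`. -/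
def sigmaPerm (T S : YNumbering μ n) : Equiv.Perm (Fin n) := T.symm.trans S

/-- `v_T^S = σ_{T,S} · b_T · a_T` in the group algebra. -/
noncomputable def vElt (R : Type*) [CommRing R] (T S : YNumbering μ n) :
    MonoidAlgebra R (Equiv.Perm (Fin n)) :=
  MonoidAlgebra.single (sigmaPerm T S) (1 : R) * cElt R T

end YNumbering

/-!
Exchanging two rows of equal length is a permutation `e` of the cells that preserves columns and
maps rows to rows, so `U = T ∘ e` has the same row and column groups as `T`, and
`σ_{U,S} = σ_{T,S} τ` with `τ = T e⁻¹ T⁻¹ ∈ C(T)`. Since `τ b_T = sgn(τ) b_T`, this gives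
`v_U^S = sgn(e) v_T^S`, and `e` is a product of `ℓ` disjoint transpositions.
-/

namespace YoungDiagram

variable {μ : YoungDiagram} {r₁ r₂ : ℕ}

lemma rowLen_swap_apply (h : μ.rowLen r₁ = μ.rowLen r₂) (i : ℕ) :
    μ.rowLen (swap r₁ r₂ i) = μ.rowLen i := by
  rcases eq_or_ne i r₁ with rfl | h₁
  · rw [swap_apply_left, h]
  rcases eq_or_ne i r₂ with rfl | h₂
  · rw [swap_apply_right, h]
  · rw [swap_apply_of_ne_of_ne h₁ h₂]

variable (μ) in
def rowSwap (h : μ.rowLen r₁ = μ.rowLen r₂) : Perm μ.cells :=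
  (prodCongr (swap r₁ r₂) (Equiv.refl ℕ)).subtypeEquiv fun ⟨i, j⟩ => by
    simp only [mem_cells, prodCongr_apply, Prod.map, coe_refl, id, mem_iff_lt_rowLen,
      rowLen_swap_apply h]

lemma mk_mem_cells_of_rowLen_eq (h : μ.rowLen r₁ = μ.rowLen r₂) {j : ℕ}
    (hc : (r₁, j) ∈ μ.cells) : (r₂, j) ∈ μ.cells :=
  mem_iff_lt_rowLen.2 (h ▸ mem_iff_lt_rowLen.1 hc)

@[simp]
lemma coe_rowSwap_apply (h : μ.rowLen r₁ = μ.rowLen r₂) (c : μ.cells) :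
    (μ.rowSwap h c : ℕ × ℕ) = (swap r₁ r₂ (c : ℕ × ℕ).1, (c : ℕ × ℕ).2) :=
  rfl

/- The cells moved by `rowSwap` are matched with `Fin ℓ × Bool`, on which it acts as `ℓ` disjoint
transpositions `(j, false) ↔ (j, true)`. -/
lemma sign_rowSwap (h : μ.rowLen r₁ = μ.rowLen r₂) (hne : r₁ ≠ r₂) :
    Perm.sign (μ.rowSwap h) = (-1) ^ μ.rowLen r₁ := by
  have hmem (j : Fin (μ.rowLen r₁)) (b : Bool) : (bif b then r₁ else r₂, (j : ℕ)) ∈ μ.cells := by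
    cases b
    · exact mem_iff_lt_rowLen.2 (h ▸ j.2)
    · exact mem_iff_lt_rowLen.2 j.2
  calc Perm.sign (μ.rowSwap h)
      = Perm.sign (prodCongrRight fun _ : Fin (μ.rowLen r₁) => swap false true) := by
        symm
        refine Perm.sign_bij (fun x _ => ⟨_, hmem x.1 x.2⟩) ?_ ?_ ?_
        · rintro ⟨j, (_ | _)⟩ _ _ <;> apply Subtype.ext <;> simp
        · rintro ⟨j, b⟩ ⟨j', b'⟩ _ _ hx
          simp only [Subtype.mk.injEq, Prod.mk.injEq] at hx
          cases b <;> cases b' <;> simp_all [Fin.ext_iff, eq_comm]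
        · rintro ⟨⟨i, j⟩, hc⟩ hfix
          rcases eq_or_ne i r₁ with rfl | h₁
          · exact ⟨(⟨j, mem_iff_lt_rowLen.1 hc⟩, true), by simp, rfl⟩
          rcases eq_or_ne i r₂ with rfl | h₂
          · exact ⟨(⟨j, h ▸ mem_iff_lt_rowLen.1 hc⟩, false), by simp, rfl⟩
          · exact absurd (Subtype.ext (by simp [swap_apply_of_ne_of_ne h₁ h₂])) hfix
    _ = (-1) ^ μ.rowLen r₁ := by simp [Perm.sign_prodCongrRight]

end YoungDiagram

namespace YNumbering

variable {μ : YoungDiagram} {n : ℕ} {R : Type*} [CommRing R]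

lemma colFn_trans {e : Perm μ.cells} (he : ∀ c, (e c : ℕ × ℕ).2 = (c : ℕ × ℕ).2)
    (T : YNumbering μ n) : colFn (e.trans T) = T.colFn := by
  funext i
  simpa [colFn] using (he (e.symm (T.symm i))).symm

lemma colGroup_trans {e : Perm μ.cells} (he : ∀ c, (e c : ℕ × ℕ).2 = (c : ℕ × ℕ).2)
    (T : YNumbering μ n) : colGroup (e.trans T) = T.colGroup := by
  ext π
  change (∀ i, _ = _) ↔ ∀ i, _ = _
  rw [colFn_trans he]

lemma rowGroup_trans {e : Perm μ.cells}
    (he : ∀ c d, (e c : ℕ × ℕ).1 = (e d : ℕ × ℕ).1 ↔ (c : ℕ × ℕ).1 = (d : ℕ × ℕ).1)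
    (T : YNumbering μ n) : rowGroup (e.trans T) = T.rowGroup := by
  ext π
  change (∀ i, _ = _) ↔ ∀ i, _ = _
  simp only [rowFn, symm_trans_apply]
  refine forall_congr' fun i => ?_
  simpa using (he (e.symm (T.symm (π i))) (e.symm (T.symm i))).symm

lemma sigmaPerm_trans (e : Perm μ.cells) (T S : YNumbering μ n) :
    sigmaPerm (e.trans T) S = sigmaPerm T S * T.permCongr e⁻¹ := by
  ext i
  simp [sigmaPerm, Perm.mul_apply, permCongr_apply]

lemma permCongr_mem_colGroup {e : Perm μ.cells} (he : ∀ c, (e c : ℕ × ℕ).2 = (c : ℕ × ℕ).2)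
    (T : YNumbering μ n) : T.permCongr e ∈ T.colGroup := fun i => by
  simpa [colFn, permCongr_apply] using he (T.symm i)

lemma single_mul_bElt {T : YNumbering μ n} {τ : Perm (Fin n)} (hτ : τ ∈ T.colGroup) :
    single τ (1 : R) * bElt R T = ((Perm.sign τ : ℤ) : R) • bElt R T := by
  rw [bElt, Finset.mul_sum, Finset.smul_sum]
  refine Fintype.sum_equiv (Equiv.mulLeft (⟨τ, hτ⟩ : T.colGroup)) _ _ fun ζ => ?_
  rw [single_mul_single, one_mul, smul_single']
  simp [← mul_assoc, ← Int.cast_mul, ← Units.val_mul]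

theorem vElt_trans (e : Perm μ.cells) (hcol : ∀ c, (e c : ℕ × ℕ).2 = (c : ℕ × ℕ).2)
    (hrow : ∀ c d, (e c : ℕ × ℕ).1 = (e d : ℕ × ℕ).1 ↔ (c : ℕ × ℕ).1 = (d : ℕ × ℕ).1)
    (T S : YNumbering μ n) :
    vElt R (e.trans T) S = ((Perm.sign e : ℤ) : R) • vElt R T S := by
  have hcol' : ∀ c, (e⁻¹ c : ℕ × ℕ).2 = (c : ℕ × ℕ).2 := fun c => by
    simpa using (hcol (e⁻¹ c)).symm
  have hb : bElt R (e.trans T) = bElt R T := by rw [bElt, bElt, colGroup_trans hcol]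
  have ha : aElt R (e.trans T) = aElt R T := by rw [aElt, aElt, rowGroup_trans hrow]
  have hsingle : single (sigmaPerm T S * T.permCongr e⁻¹) (1 : R) =
      single (sigmaPerm T S) 1 * single (T.permCongr e⁻¹) 1 := by
    rw [single_mul_single, mul_one]
  rw [vElt, vElt, cElt, cElt, hb, ha, sigmaPerm_trans, hsingle, mul_assoc,
    ← mul_assoc (single (T.permCongr e⁻¹) 1), single_mul_bElt (permCongr_mem_colGroup hcol' T),
    Perm.sign_permCongr, Perm.sign_inv, smul_mul_assoc, mul_smul_comm]

end YNumbering

/-- If `U` is obtained from `T` by swapping two entire rows `r₁ ≠ r₂` of equal length `ℓ`,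
then `v_U^S = (-1)^ℓ * v_T^S`. -/
theorem vElt_row_swap {μ : YoungDiagram} {n : ℕ}
    (S T U : YNumbering μ n) (r₁ r₂ ℓ : ℕ) (hne : r₁ ≠ r₂)
    (hl₁ : μ.rowLen r₁ = ℓ) (hl₂ : μ.rowLen r₂ = ℓ)
    (hswap : ∀ (j : ℕ) (h₁ : ((r₁, j) : ℕ × ℕ) ∈ μ.cells) (h₂ : ((r₂, j) : ℕ × ℕ) ∈ μ.cells),
      U ⟨(r₁, j), h₁⟩ = T ⟨(r₂, j), h₂⟩ ∧ U ⟨(r₂, j), h₂⟩ = T ⟨(r₁, j), h₁⟩)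
    (hfix : ∀ c : ↥μ.cells, (c : ℕ × ℕ).1 ≠ r₁ → (c : ℕ × ℕ).1 ≠ r₂ → U c = T c) :
    YNumbering.vElt ℤ U S = ((-1 : ℤ) ^ ℓ) • YNumbering.vElt ℤ T S := by
  have hlen : μ.rowLen r₁ = μ.rowLen r₂ := hl₁.trans hl₂.symm
  have hU : U = (μ.rowSwap hlen).trans T := by
    ext ⟨⟨i, j⟩, hc⟩ : 1
    rw [trans_apply]
    rcases eq_or_ne i r₁ with rfl | h₁
    · convert (hswap j hc (YoungDiagram.mk_mem_cells_of_rowLen_eq hlen hc)).1 using 2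
      ext <;> simp
    rcases eq_or_ne i r₂ with rfl | h₂
    · convert (hswap j (YoungDiagram.mk_mem_cells_of_rowLen_eq hlen.symm hc) hc).2 using 2
      ext <;> simp
    · convert hfix ⟨(i, j), hc⟩ h₁ h₂ using 2
      ext <;> simp [swap_apply_of_ne_of_ne h₁ h₂]
  rw [hU, YNumbering.vElt_trans _ (fun _ => rfl) (fun _ _ => (swap r₁ r₂).injective.eq_iff),
    YoungDiagram.sign_rowSwap hlen hne, hl₁]
  simp
end

section
/- Let T be a numbering of shape λ ⊢ n and suppose two entries lying in the same column of T belong to a set P∪Q, where P and Q are disjoint subsets of {1,…,n}. Let G = S_{P∪Q}. Then Σ_{γ∈G} b_T·a_T·γ can be written as a sum of terms of the form b_T·(e+τ)·ξ with τ a column transposition of some numbering ρ⁻¹·T, and consequently Σ_{γ∈G} b_T·a_T·γ = 0 whenever for every ρ ∈ R(T) some two elements of P∪Q share a column of ρ⁻¹·T. -/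
open Equiv MonoidAlgebra
open scoped Classical

/-- A *numbering* of shape `μ ⊢ n`: a bijective filling of the cells of the Young diagram `μ`
with the entries `Fin n` (representing `1, …, n`). -/
abbrev YoungNumbering (μ : YoungDiagram) (n : ℕ) := ↥μ.cells ≃ Fin n

namespace YoungNumbering

variable {μ : YoungDiagram} {n : ℕ}

/-- The action of `π ∈ S_n` on numberings: `(π • T) c = π (T c)`. -/
def perm (π : Equiv.Perm (Fin n)) (T : YoungNumbering μ n) : YoungNumbering μ n := T.trans π

/-- The row index of the cell of `T` containing the entry `i`. -/
def rowFn (T : YoungNumbering μ n) (i : Fin n) : ℕ := ((T.symm i : ℕ × ℕ)).1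

/-- The column index of the cell of `T` containing the entry `i`. -/
def colFn (T : YoungNumbering μ n) (i : Fin n) : ℕ := ((T.symm i : ℕ × ℕ)).2

/-- The row group `R(T)`: permutations permuting the entries within each row of `T`. -/
def rowGroup (T : YoungNumbering μ n) : Subgroup (Equiv.Perm (Fin n)) where
  carrier := {π | ∀ i, T.rowFn (π i) = T.rowFn i}
  one_mem' := fun _ => rfl
  mul_mem' := by
    intro a b ha hb i
    rw [Equiv.Perm.mul_apply, ha, hb]
  inv_mem' := by
    intro a ha i
    have h := ha (a⁻¹ i)
    rw [show a (a⁻¹ i) = i from Equiv.apply_symm_apply a i] at h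
    exact h.symm

/-- The column group `C(T)`: permutations permuting the entries within each column of `T`. -/
def colGroup (T : YoungNumbering μ n) : Subgroup (Equiv.Perm (Fin n)) where
  carrier := {π | ∀ i, T.colFn (π i) = T.colFn i}
  one_mem' := fun _ => rfl
  mul_mem' := by
    intro a b ha hb i
    rw [Equiv.Perm.mul_apply, ha, hb]
  inv_mem' := by
    intro a ha i
    have h := ha (a⁻¹ i)
    rw [show a (a⁻¹ i) = i from Equiv.apply_symm_apply a i] at h
    exact h.symm

/-- The Young symmetrizer `a_T = Σ_{ρ ∈ R(T)} ρ` in the group algebra `R[S_n]`. -/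
noncomputable def aElt (R : Type*) [CommRing R] (T : YoungNumbering μ n) :
    MonoidAlgebra R (Equiv.Perm (Fin n)) :=
  ∑ ρ : T.rowGroup, MonoidAlgebra.single (ρ : Equiv.Perm (Fin n)) (1 : R)

/-- The Young symmetrizer `b_T = Σ_{ζ ∈ C(T)} sgn(ζ)·ζ` in the group algebra `R[S_n]`. -/
noncomputable def bElt (R : Type*) [CommRing R] (T : YoungNumbering μ n) :
    MonoidAlgebra R (Equiv.Perm (Fin n)) :=
  ∑ ζ : T.colGroup, MonoidAlgebra.single (ζ : Equiv.Perm (Fin n))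
    (((Equiv.Perm.sign (ζ : Equiv.Perm (Fin n)) : ℤ) : R))

/-- The Young symmetrizer `c_T = b_T · a_T`. -/
noncomputable def cElt (R : Type*) [CommRing R] (T : YoungNumbering μ n) :
    MonoidAlgebra R (Equiv.Perm (Fin n)) :=
  bElt R T * aElt R T

/-- `σ_{T,S}` : the unique permutation with `σ_{T,S} · T = S`. -/
def sigmaPerm (T S : YoungNumbering μ n) : Equiv.Perm (Fin n) := T.symm.trans S

/-- `v_T^S = σ_{T,S} · b_T · a_T` in the group algebra. -/
noncomputable def vElt (R : Type*) [CommRing R] (T S : YoungNumbering μ n) :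
    MonoidAlgebra R (Equiv.Perm (Fin n)) :=
  MonoidAlgebra.single (sigmaPerm T S) (1 : R) * cElt R T

end YoungNumbering

/-!
For `ρ ∈ R(T)` pick `i ≠ j` in `P ∪ Q` sharing a column of `ρ⁻¹ • T`, and let `τ = (i j) ∈ G`.
Then `ρ τ = τ' ρ` with `τ' = (ρ i  ρ j)` a column transposition of `T`, so `b_T ρ τ = -b_T ρ`,
while `τ` is absorbed by `Σ_{γ ∈ G} γ`. Hence `b_T ρ Σ_G γ` equals its own negative, so it
vanishes in the torsion-free group `ℤ[S_n]`; summing over `ρ` gives `c_T Σ_G γ = 0`.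
-/

namespace MonoidAlgebra

instance instIsAddTorsionFree {R M : Type*} [Semiring R] [IsAddTorsionFree R] :
    IsAddTorsionFree (MonoidAlgebra R M) :=
  Function.Injective.isAddTorsionFree (coeffAddEquiv (R := R) (M := M)).toAddMonoidHom
    coeff_injective

theorem single_one_mul_sum_subgroup {k G : Type*} [Semiring k] [Group G] (H : Subgroup G)
    [Fintype H] {g : G} (hg : g ∈ H) :
    single g (1 : k) * ∑ h : H, single (h : G) 1 = ∑ h : H, single (h : G) 1 := by
  rw [Finset.mul_sum]
  exact Fintype.sum_equiv (Equiv.mulLeft ⟨g, hg⟩) _ _ fun h => by simp [single_mul_single]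

end MonoidAlgebra

namespace YoungNumbering

variable {μ : YoungDiagram} {n : ℕ} (T : YoungNumbering μ n) {R : Type*} [CommRing R]

theorem colFn_perm (π : Perm (Fin n)) (i : Fin n) : (T.perm π).colFn i = T.colFn (π⁻¹ i) := rfl

variable {T} in
theorem swap_mem_colGroup {i j : Fin n} (h : T.colFn i = T.colFn j) : swap i j ∈ T.colGroup := by
  intro k
  rw [swap_apply_def]
  split_ifs with hi hj
  · rw [hi, h]
  · rw [hj, h]
  · rfl

theorem bElt_mul_single_of_mem_colGroup {τ : Perm (Fin n)} (hτ : τ ∈ T.colGroup) :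
    bElt R T * single τ 1 = ((Perm.sign τ : ℤ) : R) • bElt R T := by
  rw [bElt, Finset.sum_mul, Finset.smul_sum]
  refine Fintype.sum_equiv (Equiv.mulRight ⟨τ, hτ⟩) _ _ fun ζ => ?_
  simp only [single_mul_single, Equiv.coe_mulRight, Subgroup.coe_mul, smul_single',
    Perm.sign_mul]
  rw [Units.val_mul, Int.cast_mul, mul_left_comm, ← Int.cast_mul, ← Units.val_mul,
    Int.units_mul_self, Units.val_one, Int.cast_one, mul_one]

theorem bElt_mul_single_swap {i j : Fin n} (hij : i ≠ j) (h : T.colFn i = T.colFn j) :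
    bElt R T * single (swap i j) 1 = -bElt R T := by
  simp [bElt_mul_single_of_mem_colGroup T (swap_mem_colGroup h), Perm.sign_swap hij]

theorem bElt_mul_single_mul_sum_subgroup_eq_zero [IsAddTorsionFree R]
    (H : Subgroup (Perm (Fin n))) [Fintype H] (ρ : Perm (Fin n)) {i j : Fin n} (hij : i ≠ j)
    (hH : swap i j ∈ H) (hcol : (T.perm ρ⁻¹).colFn i = (T.perm ρ⁻¹).colFn j) :
    bElt R T * single ρ 1 * ∑ γ : H, single (γ : Perm (Fin n)) 1 = 0 := by
  set x := bElt R T * single ρ (1 : R)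
  have hx : x * single (swap i j) 1 = -x := by
    calc x * single (swap i j) 1 = bElt R T * single (swap (ρ i) (ρ j)) 1 * single ρ 1 := by
          simp only [x, mul_assoc, single_mul_single, mul_one, mul_swap_eq_swap_mul]
      _ = -x := by
          rw [bElt_mul_single_swap T (ρ.injective.ne hij) (by simpa [colFn_perm] using hcol),
            neg_mul]
  rw [← self_eq_neg]
  calc x * ∑ γ : H, single (γ : Perm (Fin n)) 1
      = x * (single (swap i j) 1 * ∑ γ : H, single (γ : Perm (Fin n)) 1) := by
        rw [single_one_mul_sum_subgroup H hH]
    _ = -(x * ∑ γ : H, single (γ : Perm (Fin n)) 1) := by rw [← mul_assoc, hx, neg_mul]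

end YoungNumbering

theorem sum_cElt_eq_zero_general {μ : YoungDiagram} {n : ℕ}
    (T : YoungNumbering μ n) (P Q : Finset (Fin n))
    (G : Subgroup (Equiv.Perm (Fin n)))
    (hG : ∀ π : Equiv.Perm (Fin n), π ∈ G ↔ ∀ i, i ∉ P ∪ Q → π i = i)
    (hall : ∀ ρ ∈ T.rowGroup, ∃ i j : Fin n, i ∈ P ∪ Q ∧ j ∈ P ∪ Q ∧ i ≠ j ∧
      (YoungNumbering.perm ρ⁻¹ T).colFn i = (YoungNumbering.perm ρ⁻¹ T).colFn j) :
    ∑ γ : G, YoungNumbering.cElt ℤ T * MonoidAlgebra.single (γ : Equiv.Perm (Fin n)) (1 : ℤ) = 0 := by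
  have swap_mem : ∀ {i j}, i ∈ P ∪ Q → j ∈ P ∪ Q → swap i j ∈ G := fun hi hj =>
    (hG _).2 fun k hk => swap_apply_of_ne_of_ne (ne_of_mem_of_not_mem hi hk).symm
      (ne_of_mem_of_not_mem hj hk).symm
  rw [← Finset.mul_sum, YoungNumbering.cElt, YoungNumbering.aElt,
    Finset.mul_sum _ _ (YoungNumbering.bElt ℤ T), Finset.sum_mul]
  refine Finset.sum_eq_zero fun ρ _ => ?_
  obtain ⟨i, j, hi, hj, hij, hcol⟩ := hall ρ ρ.2
  exact T.bElt_mul_single_mul_sum_subgroup_eq_zero G ρ hij (swap_mem hi hj) hcol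

/-- Suppose two entries lying in the same column of `T` belong to `P ∪ Q`, where `P` and `Q` are
disjoint subsets of `{1,…,n}`, and let `G = S_{P∪Q}`.  If for every `ρ ∈ R(T)` some two elements
of `P ∪ Q` share a column of `ρ⁻¹ • T`, then `Σ_{γ∈G} b_T * a_T * γ = 0`. -/
theorem sum_cElt_eq_zero {μ : YoungDiagram} {n : ℕ}
    (T : YoungNumbering μ n) (P Q : Finset (Fin n)) (hPQ : Disjoint P Q)
    (G : Subgroup (Equiv.Perm (Fin n)))
    (hG : ∀ π : Equiv.Perm (Fin n), π ∈ G ↔ ∀ i, i ∉ P ∪ Q → π i = i)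
    (hcol : ∃ i j : Fin n, i ∈ P ∪ Q ∧ j ∈ P ∪ Q ∧ i ≠ j ∧ T.colFn i = T.colFn j)
    (hall : ∀ ρ ∈ T.rowGroup, ∃ i j : Fin n, i ∈ P ∪ Q ∧ j ∈ P ∪ Q ∧ i ≠ j ∧
      (YoungNumbering.perm ρ⁻¹ T).colFn i = (YoungNumbering.perm ρ⁻¹ T).colFn j) :
    ∑ γ : G, YoungNumbering.cElt ℤ T * MonoidAlgebra.single (γ : Equiv.Perm (Fin n)) (1 : ℤ) = 0 :=
  sum_cElt_eq_zero_general T P Q G hG hall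
end

section
/- Let d_1 be the 5×18 integer matrix and d_2 the 18×15 integer matrix given by the (2^3)-isotypic differentials of the graph G_1 (as specified). Then d_1·d_2 = 0, the kernel of d_1 has dimension 13 over ℚ, and d_2 has rank 11 over ℚ; hence dim ker d_1 − rank d_2 = 2. -/
/-!
Each rank is certified over `ℤ` by a set of columns together with an integer left inverse of
the submatrix they form: `d₁` has rank `5` (full row rank) and `d₂` has rank `11`. Rank–nullity
then gives `dim ker d₁ = 18 - 5 = 13`, and `d₁ d₂ = 0` is a direct computation.
-/

/-- The matrix of the differential `d₁(G₁)` on the `(2,2,2)`-isotypic components. -/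
def d1G1 : Matrix (Fin 5) (Fin 18) ℤ :=
  Matrix.of ![![1, 0, 0, 0, -1, 0, 1, -1, 0, 1, -1, 0, -1, 0, 0, 0, 1, 0],
    ![0, 0, 1, 0, -1, 0, 0, 0, 0, 1, 0, 0, 0, -1, 0, 0, 0, 1],
    ![0, 1, 0, 0, 0, -1, 0, 0, 1, 0, -1, 0, -1, 0, 1, 0, 0, 0],
    ![0, 0, 0, 1, 0, -1, 0, 1, 0, 0, 0, 0, 0, -1, 0, 1, 0, 0],
    ![0, 0, 0, 0, 0, 0, 0, 1, 0, -1, 0, 1, 0, 0, 0, 0, 0, 0]]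

/-- The matrix of the differential `d₂(G₁)` on the `(2,2,2)`-isotypic components. -/
def d2G1 : Matrix (Fin 18) (Fin 15) ℤ :=
  Matrix.of ![![-1, 0, 1, 1, 0, -1, 0, 0, 0, 0, 0, 0, 0, 0, 0],
    ![0, -1, 1, 1, -1, 0, 0, 0, 0, 0, 0, 0, 0, 0, 0],
    ![0, 0, 0, 0, 0, 0, 1, 0, -1, 0, 0, 0, 0, 0, 0],
    ![0, 0, 0, 0, 0, 0, 1, -1, 0, 0, 0, 0, 0, 0, 0],
    ![0, 0, 0, 0, 0, 0, 0, 0, 0, 1, 0, -1, 0, 0, 0],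
    ![0, 0, 0, 0, 0, 0, 0, 0, 0, 1, -1, 0, 0, 0, 0],
    ![1, 0, 0, 0, 0, 0, 0, 0, 0, 0, 0, 0, -1, 0, 0],
    ![0, 0, 0, 0, 0, 0, 0, 0, 0, 0, 0, 0, 0, 0, 0],
    ![0, 1, 0, 0, 0, 0, 0, 0, 0, 0, 0, 0, 0, -1, 0],
    ![0, 0, 0, 0, 0, 0, 0, 0, 0, 0, 0, 0, 0, 0, 0],
    ![0, 0, 1, 0, 0, 0, 0, 0, 0, 0, 0, 0, 0, 0, -1],
    ![0, 0, 0, 0, 0, 0, 0, 0, 0, 0, 0, 0, 0, 0, 0],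
    ![0, 0, 0, 1, 0, 0, 0, 0, 0, -1, 0, 0, 0, 0, 1],
    ![0, 0, 0, 0, 0, 0, 1, 0, 0, -1, 0, 0, 0, 0, 0],
    ![0, 0, 0, 0, 1, 0, 0, 0, 0, 0, -1, 0, 0, 1, 0],
    ![0, 0, 0, 0, 0, 0, 0, 1, 0, 0, -1, 0, 0, 0, 0],
    ![0, 0, 0, 0, 0, 1, 0, 0, 0, 0, 0, -1, 1, 0, 0],
    ![0, 0, 0, 0, 0, 0, 0, 0, 1, 0, 0, -1, 0, 0, 0]]


open Module

namespace Matrix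

variable {R K k m n : Type*} [CommRing R] [Field K] [Fintype n]

theorem rank_add_finrank_ker_mulVecLin (A : Matrix m n K) :
    A.rank + finrank K (LinearMap.ker A.mulVecLin) = Fintype.card n :=
  (LinearMap.finrank_range_add_finrank_ker A.mulVecLin).trans (finrank_fintype_fun_eq_card K)

/-- `P * A` gives the coordinates of every column of `A` in the columns `c`, so these span the
column space, and `P` shows they stay independent after any base change `f`. -/
theorem rank_map_eq_card_of_mul_submatrix_eq_one [Fintype k] [Fintype m] [DecidableEq k]
    (f : R →+* K) {A : Matrix m n R} {P : Matrix k m R} {c : k → n} (hP : P * A.submatrix id c = 1)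
    (hA : A.submatrix id c * (P * A) = A) : (A.map f).rank = Fintype.card k := by
  apply le_antisymm
  · calc (A.map f).rank = ((A.submatrix id c).map f * (P * A).map f).rank := by
          rw [← Matrix.map_mul, hA]
      _ ≤ ((P * A).map f).rank := rank_mul_le_right _ _
      _ ≤ Fintype.card k := rank_le_card_height _
  · calc Fintype.card k = (1 : Matrix k k K).rank := rank_one.symm
      _ = (P.map f * (A.map f).submatrix id c).rank := by
          rw [submatrix_map, ← Matrix.map_mul, hP, Matrix.map_one _ f.map_zero f.map_one]
      _ ≤ ((A.map f).submatrix id c).rank := rank_mul_le_right _ _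
      _ ≤ (A.map f).rank := rank_submatrix_le _ _ _

end Matrix

def d1G1BasisCols : Fin 5 → Fin 18 := ![0, 1, 2, 3, 7]

def d1G1LeftInv : Matrix (Fin 5) (Fin 5) ℤ :=
  Matrix.of ![![1, 0, 0, 0, 1],
    ![0, 0, 1, 0, 0],
    ![0, 1, 0, 0, 0],
    ![0, 0, 0, 1, -1],
    ![0, 0, 0, 0, 1]]

def d2G1BasisCols : Fin 11 → Fin 15 := Fin.castLE (by norm_num)

def d2G1LeftInv : Matrix (Fin 11) (Fin 18) ℤ :=
  Matrix.of ![![0, 0, 0, 0, 0, 0, 1, 0, 0, 0, 0, 0, 0, 0, 0, 0, 0, 0],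
    ![0, 0, 0, 0, 0, 0, 0, 0, 1, 0, 0, 0, 0, 0, 0, 0, 0, 0],
    ![0, 0, 0, 0, 0, 0, 0, 0, 0, 0, 1, 0, 0, 0, 0, 0, 0, 0],
    ![0, 0, 0, 0, 1, 0, 0, 0, 0, 0, 0, 0, 1, 0, 0, 0, 0, 0],
    ![0, -1, 0, 0, 1, 0, 0, 0, -1, 0, 1, 0, 1, 0, 0, 0, 0, 0],
    ![-1, 0, 0, 0, 1, 0, -1, 0, 0, 0, 1, 0, 1, 0, 0, 0, 0, 0],
    ![0, 0, 0, 0, 1, 0, 0, 0, 0, 0, 0, 0, 0, 1, 0, 0, 0, 0],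
    ![0, 0, 0, -1, 1, 0, 0, 0, 0, 0, 0, 0, 0, 1, 0, 0, 0, 0],
    ![0, 0, -1, 0, 1, 0, 0, 0, 0, 0, 0, 0, 0, 1, 0, 0, 0, 0],
    ![0, 0, 0, 0, 1, 0, 0, 0, 0, 0, 0, 0, 0, 0, 0, 0, 0, 0],
    ![0, 0, 0, 0, 1, -1, 0, 0, 0, 0, 0, 0, 0, 0, 0, 0, 0, 0]]

theorem rank_d1G1 : (d1G1.map (Int.cast : ℤ → ℚ)).rank = 5 :=
  Matrix.rank_map_eq_card_of_mul_submatrix_eq_one (Int.castRingHom ℚ)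
    (P := d1G1LeftInv) (c := d1G1BasisCols) (by decide) (by decide)

theorem rank_d2G1 : (d2G1.map (Int.cast : ℤ → ℚ)).rank = 11 :=
  Matrix.rank_map_eq_card_of_mul_submatrix_eq_one (Int.castRingHom ℚ)
    (P := d2G1LeftInv) (c := d2G1BasisCols) (by decide) (by decide)

theorem finrank_ker_d1G1 :
    finrank ℚ (LinearMap.ker (Matrix.mulVecLin (d1G1.map (Int.cast : ℤ → ℚ)))) = 13 := by
  have := Matrix.rank_add_finrank_ker_mulVecLin (d1G1.map (Int.cast : ℤ → ℚ))
  rw [rank_d1G1, Fintype.card_fin] at this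
  omega

/-- For the `(2,2,2)`-isotypic differentials of the graph `G₁`: `d₁ · d₂ = 0`, the kernel of
`d₁` has dimension `13` over `ℚ`, `d₂` has rank `11` over `ℚ`, and hence
`dim ker d₁ - rank d₂ = 2`. -/
theorem G1_isotypic_differentials :
    d1G1 * d2G1 = 0 ∧
    Module.finrank ℚ
      (LinearMap.ker (Matrix.mulVecLin (d1G1.map (Int.cast : ℤ → ℚ)))) = 13 ∧
    (d2G1.map (Int.cast : ℤ → ℚ)).rank = 11 ∧
    Module.finrank ℚ
        (LinearMap.ker (Matrix.mulVecLin (d1G1.map (Int.cast : ℤ → ℚ)))) -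
      (d2G1.map (Int.cast : ℤ → ℚ)).rank = 2 := by
  refine ⟨by decide, finrank_ker_d1G1, rank_d2G1, ?_⟩
  rw [finrank_ker_d1G1, rank_d2G1]
end

section
/- Let d_1 be the 9×27 and d_2 the 27×18 integer matrices giving the (2,2,1,1)-isotypic differentials of K_{3,3}. Let g ∈ ℤ^18 and h ∈ ℤ^27 be the explicit integer vectors specified. Then d_1·d_2 = 0, d_2·g = 2h, d_1·h = 0, and h is not in the image of d_2 over ℤ; consequently the homology group ker(d_1)/im(d_2) over ℤ contains an element of order 2. -/
/-- The matrix of the differential `d₁(K₃₃)` on the `(2,2,1,1)`-isotypic components. -/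
def d1K33 : Matrix (Fin 9) (Fin 27) ℤ :=
  Matrix.of ![![1, 0, 0, -1, 0, 0, 0, -1, 0, -1, 0, 0, 0, 0, 0, 1, -1, 1, 0, -1, 0, -1, 0, -1, 0, 0, 0],
    ![0, 1, 0, 0, 0, 0, 0, 0, -1, 0, -1, 0, 0, 0, -1, 0, 0, 0, 0, 0, -1, -1, 0, -1, 1, 0, 0],
    ![0, 0, 1, 0, 0, 0, -1, 1, -1, 0, 0, -1, 0, 0, -1, 0, 0, 0, 1, 0, 0, 0, 0, 0, 1, 0, 0],
    ![0, 0, 0, -1, 0, 0, 0, 0, 0, -1, 0, 0, 0, 0, 0, 0, 0, 0, 0, -1, 0, 0, -1, 0, 0, 0, 0],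
    ![0, 0, 0, 0, 0, 0, 0, 0, 0, 0, -1, 0, 1, 0, 0, 0, 1, 0, 0, 0, -1, 0, -1, 0, 0, 1, 0],
    ![0, 0, 0, 0, 0, 0, -1, 0, 0, 0, 0, -1, 0, 0, 0, 0, 0, 1, 0, 0, 0, 0, 0, 0, 0, 1, 0],
    ![0, 0, 0, 0, 1, 0, 0, 0, 0, 0, 0, 0, 0, 1, 0, 0, 1, 0, 0, 0, 0, 0, 0, 0, 0, 0, 1],
    ![0, 0, 0, 0, 0, 1, 0, -1, 0, 0, 0, 0, 0, 0, 0, 0, 0, 1, 0, -1, 0, 0, 0, -1, 0, 0, 1],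
    ![0, 0, 0, 0, 0, 0, 0, 0, -1, 0, 0, 0, 0, 0, -1, 0, 0, 0, 0, 0, -1, 0, 0, -1, 0, 0, 0]]

/-- The matrix of the differential `d₂(K₃₃)` on the `(2,2,1,1)`-isotypic components. -/
def d2K33 : Matrix (Fin 27) (Fin 18) ℤ :=
  Matrix.of ![![-1, 0, 1, 0, 0, 0, 0, 0, 0, 0, 0, 0, 0, 0, 0, 0, 0, 0],
    ![0, 0, 1, -1, 0, 0, 0, 0, 0, 0, 0, 0, 0, 0, 0, 0, 0, 0],
    ![0, -1, 0, -1, 0, 0, 0, 0, 0, 0, 0, 0, 0, 0, 0, 0, 0, 0],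
    ![0, 0, 0, 0, -1, 0, -1, 0, 0, 0, 0, 0, 0, 0, 0, 0, 0, 0],
    ![0, 0, 0, 0, 0, -1, 0, -1, 0, 0, 0, 0, 0, 0, 0, 0, 0, 0],
    ![0, 0, 0, 0, 0, 0, 1, -1, 0, 0, 0, 0, 0, 0, 0, 0, 0, 0],
    ![0, 0, 0, 0, 0, 0, 0, 0, -1, 0, 1, 0, 0, 0, 0, 0, 0, 0],
    ![0, 0, 0, 0, 0, 0, 0, 0, 0, 0, 1, -1, 0, 0, 0, 0, 0, 0],
    ![0, 0, 0, 0, 0, 0, 0, 0, 0, -1, 0, -1, 0, 0, 0, 0, 0, 0],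
    ![0, 0, 0, 0, 1, 0, 0, 0, 0, 0, 0, 0, 1, 0, 0, 0, 0, 0],
    ![0, 0, 0, 0, 0, 0, 0, 0, 0, 0, 0, 0, 1, -1, 0, 0, 0, 0],
    ![0, 0, 0, 0, 0, 0, 0, 0, 1, 0, 0, 0, 0, -1, 0, 0, 0, 0],
    ![0, 0, 0, 0, 0, 0, 0, 0, 0, 0, 0, 0, 0, 0, 1, -1, 0, 0],
    ![0, 0, 0, 0, 0, 1, 0, 0, 0, 0, 0, 0, 0, 0, 1, 0, 0, 0],
    ![0, 0, 0, 0, 0, 0, 0, 0, 0, 1, 0, 0, 0, 0, 0, 1, 0, 0],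
    ![1, 0, 0, 0, 0, 0, 0, 0, 0, 0, 0, 0, 0, 0, -1, 0, 0, 0],
    ![0, 0, 0, 0, 0, 0, 0, 0, 0, 0, 0, 0, 0, 0, -1, 0, -1, 0],
    ![0, 0, 0, 0, 0, 0, 0, 0, 0, 0, 1, 0, 0, 0, 0, 0, -1, 0],
    ![0, 1, 0, 0, 0, 0, 0, 0, 0, 0, 0, 0, 0, 0, 0, 1, 0, 0],
    ![0, 0, 0, 0, 0, 0, 1, 0, 0, 0, 0, 0, 0, 0, 0, 0, 0, -1],
    ![0, 0, 0, 0, 0, 0, 0, 0, 0, 0, 0, 0, 0, 0, 0, -1, 0, -1],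
    ![0, 0, 1, 0, 0, 0, 0, 0, 0, 0, 0, 0, -1, 0, 0, 0, 0, 0],
    ![0, 0, 0, 0, 0, 0, 0, 0, 0, 0, 0, 0, -1, 0, 0, 0, 0, 1],
    ![0, 0, 0, 0, 0, 0, 0, 0, 0, 0, 0, 1, 0, 0, 0, 0, 0, 1],
    ![0, 0, 0, 1, 0, 0, 0, 0, 0, 0, 0, 0, 0, -1, 0, 0, 0, 0],
    ![0, 0, 0, 0, 0, 0, 0, 0, 0, 0, 0, 0, 0, -1, 0, 0, 1, 0],
    ![0, 0, 0, 0, 0, 0, 0, 1, 0, 0, 0, 0, 0, 0, 0, 0, 1, 0]]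

/-- The explicit vector `g` (in the `W`-basis). -/
def gK33 : Fin 18 → ℤ := ![1, -1, 1, 1, -1, -1, 1, 1, 1, -1, 1, 1, 1, 1, 1, 1, -1, 1]

/-- The explicit vector `h` (in the `X`-basis). -/
def hK33 : Fin 27 → ℤ := ![0, 0, 0, 0, 0, 0, 0, 0, 0, 0, 0, 0, 0, 0, 0, 0, 0, 1, 0, 0, -1, 0, 0, 1, 0, -1, 0]

/-!
The identities `d₁ d₂ = 0`, `d₂ g = 2h` and `d₁ h = 0` are finite computations, and they make the
class of `h` in `ker d₁ / im d₂` a cycle killed by `2`. It is nonzero by a parity obstruction: the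
row vector `u = uK33` satisfies `u d₂ ≡ 0 (mod 2)` but `u · h = 1`, so `h = d₂ x` would make `1`
even.
-/

open Matrix

theorem Matrix.not_exists_mulVec_eq_of_dvd_vecMul {m n R : Type*} [Fintype m] [Fintype n]
    [CommRing R] {A : Matrix m n R} {b u : m → R} {c : R}
    (hu : ∀ j, c ∣ (u ᵥ* A) j) (hb : ¬ c ∣ u ⬝ᵥ b) : ¬ ∃ x, A *ᵥ x = b := by
  rintro ⟨x, rfl⟩
  rw [dotProduct_mulVec] at hb
  exact hb (Finset.dvd_sum fun j _ => (hu j).mul_right (x j))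

theorem Submodule.addOrderOf_mkQ_eq_prime {R M : Type*} [Ring R] [AddCommGroup M] [Module R M]
    {N : Submodule R M} {p : ℕ} [Fact p.Prime] {x : M} (hp : p • x ∈ N) (hx : x ∉ N) :
    addOrderOf (N.mkQ x) = p :=
  addOrderOf_eq_prime ((Quotient.mk_smul N p x).symm.trans ((Quotient.mk_eq_zero N).2 hp))
    fun h => hx ((Quotient.mk_eq_zero N).1 h)

theorem Matrix.exists_addOrderOf_homology_eq_prime {l m n R : Type*} [Fintype m] [Fintype n]
    [CommRing R] {d₁ : Matrix l m R} {d₂ : Matrix m n R} {p : ℕ} [Fact p.Prime] {g : n → R}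
    {h : m → R} (hg : d₂ *ᵥ g = p • h) (hcycle : d₁ *ᵥ h = 0) (hboundary : ¬ ∃ x, d₂ *ᵥ x = h) :
    ∃ z : ↥(LinearMap.ker d₁.mulVecLin) ⧸
        (LinearMap.range d₂.mulVecLin).comap (LinearMap.ker d₁.mulVecLin).subtype,
      addOrderOf z = p :=
  ⟨_, Submodule.addOrderOf_mkQ_eq_prime (x := (⟨h, hcycle⟩ : LinearMap.ker d₁.mulVecLin))
    ⟨g, hg⟩ fun ⟨x, hx⟩ => hboundary ⟨x, hx⟩⟩

def uK33 : Fin 27 → ℤ :=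
  ![0, 0, 0, 1, 1, 1, 1, 0, 0, 1, 1, 1, 0, 1, 0, 0, 1, 1, 0, 0, 0, 0, 0, 0, 0, 0, 0]

set_option maxHeartbeats 1000000 in
set_option maxRecDepth 10000 in
theorem d1K33_mul_d2K33 : d1K33 * d2K33 = 0 := by decide

theorem d2K33_mulVec_gK33 : d2K33 *ᵥ gK33 = 2 • hK33 := by decide

theorem d1K33_mulVec_hK33 : d1K33 *ᵥ hK33 = 0 := by decide

theorem two_dvd_uK33_vecMul_d2K33 : ∀ j, 2 ∣ (uK33 ᵥ* d2K33) j := by decide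

theorem uK33_dotProduct_hK33 : uK33 ⬝ᵥ hK33 = 1 := by decide

theorem not_exists_d2K33_mulVec_eq_hK33 : ¬ ∃ x, d2K33 *ᵥ x = hK33 :=
  not_exists_mulVec_eq_of_dvd_vecMul two_dvd_uK33_vecMul_d2K33
    (by rw [uK33_dotProduct_hK33]; decide)

/-- For the `(2,2,1,1)`-isotypic differentials of `K₃₃`: `d₁ · d₂ = 0`, `d₂ g = 2h`,
`d₁ h = 0`, and `h` is not in the image of `d₂` over `ℤ`; consequently the homology group
`ker d₁ / im d₂` over `ℤ` contains an element of order `2`. -/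
theorem K33_torsion :
    d1K33 * d2K33 = 0 ∧
    d2K33.mulVec gK33 = 2 • hK33 ∧
    d1K33.mulVec hK33 = 0 ∧
    (¬ ∃ x : Fin 18 → ℤ, d2K33.mulVec x = hK33) ∧
    ∃ z : ↥(LinearMap.ker d1K33.mulVecLin) ⧸
        Submodule.comap (LinearMap.ker d1K33.mulVecLin).subtype
          (LinearMap.range d2K33.mulVecLin),
      addOrderOf z = 2 :=
  ⟨d1K33_mul_d2K33, d2K33_mulVec_gK33, d1K33_mulVec_hK33, not_exists_d2K33_mulVec_eq_hK33,
    exists_addOrderOf_homology_eq_prime d2K33_mulVec_gK33 d1K33_mulVec_hK33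
      not_exists_d2K33_mulVec_eq_hK33⟩
end
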